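/- arXiv:2506.12220 — 4 statements merged into one kernel-verified Lean document; each statement's English description precedes it below -/
import Mathlib

section
/- Hoeffding bound for sampling without replacement of bounded attention scores (Step 1 of Theorem 4.1): Let C ≥ 1, ε ∈ (0,1], 1 ≤ M ≤ N, and let a_1,…,a_N ∈ [1/C, C]. Let τ be a uniformly random permutation of {1,…,N}. Then Pr[ |(N/M)·∑_{j=1}^{M} a_{τ(j)} − ∑_{j=1}^{N} a_j| ≥ (ε/4)·∑_{j=1}^{N} a_j ] ≤ 2·exp(−ε²M/(8C⁴)). -/
/-!
For a uniformly random permutation `τ`, the values `a (τ j)`, `j < M`, form a sample of size `M`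
drawn without replacement from `a`. The average over `τ` of `∏ j < M, g (τ j)` is the
`M`-th elementary symmetric mean of the `g i`, so by Maclaurin's inequality it is at most
`(𝔼 i, g i) ^ M`, the value for a sample drawn with replacement. Applied to
`g = exp (t * (a - μ))`, where `μ` is the mean of `a`, and combined with Hoeffding's lemma for
values in `[0, C]`, this makes the centred sample sum sub-Gaussian with variance proxy `M C² / 4`.
The Chernoff bound then gives each tail beyond `t` a probability of at most
`exp (-2 t² / (M C²))`. The event of the theorem is `|∑ j < M, (a (τ j) - μ)| ≥ M ε μ / 4`, and
`μ ≥ 1 / C` turns the exponent into `ε² M / (8 C⁴)`.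
-/

open Finset Real MeasureTheory ProbabilityTheory Equiv
open scoped BigOperators NNReal

lemma pow_succ_add_mul_sub_le_pow_succ (m : ℕ) {x y : ℝ} (hx : 0 ≤ x) (hy : 0 ≤ y) :
    y ^ (m + 1) + (m + 1) * y ^ m * (x - y) ≤ x ^ (m + 1) := by
  rcases hy.eq_or_lt with rfl | hy
  · cases m <;> simp [hx]
  have hbernoulli := one_add_mul_le_pow (a := (x - y) / y)
    (by rw [le_div_iff₀ hy]; linarith) (m + 1)
  calc y ^ (m + 1) + (m + 1) * y ^ m * (x - y)
      = y ^ (m + 1) * (1 + ((m + 1 : ℕ) : ℝ) * ((x - y) / y)) := by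
        push_cast; field_simp; ring
    _ ≤ y ^ (m + 1) * (1 + (x - y) / y) ^ (m + 1) := by gcongr
    _ = x ^ (m + 1) := by rw [← mul_pow]; congr 1; field_simp; ring

namespace Finset

variable {ι : Type*} [DecidableEq ι]

lemma sum_powersetCard_succ_insert_prod {s : Finset ι} {x : ι} (hx : x ∉ s) (g : ι → ℝ)
    (m : ℕ) :
    ∑ A ∈ (insert x s).powersetCard (m + 1), ∏ i ∈ A, g i
      = ∑ A ∈ s.powersetCard (m + 1), ∏ i ∈ A, g i
        + g x * ∑ A ∈ s.powersetCard m, ∏ i ∈ A, g i := by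
  have hxA : ∀ A ∈ s.powersetCard m, x ∉ A := fun A hA h => hx ((mem_powersetCard.1 hA).1 h)
  rw [powersetCard_succ_insert hx, sum_union, sum_image, mul_sum]
  · exact congrArg _ (sum_congr rfl fun A hA => prod_insert (hxA A hA))
  · intro A hA B hB hAB
    rw [← erase_insert (hxA A hA), ← erase_insert (hxA B hB), hAB]
  · rw [disjoint_left]
    rintro _ hA hA'
    obtain ⟨B, -, rfl⟩ := mem_image.1 hA'
    exact hx ((mem_powersetCard.1 hA).1 (mem_insert_self x B))

/-- **Maclaurin's inequality**. -/
theorem sum_powersetCard_prod_le_choose_mul_expect_pow (s : Finset ι) {g : ι → ℝ}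
    (hg : ∀ i ∈ s, 0 ≤ g i) (k : ℕ) :
    ∑ A ∈ s.powersetCard k, ∏ i ∈ A, g i ≤ (#s).choose k * (𝔼 i ∈ s, g i) ^ k := by
  induction s using Finset.cons_induction generalizing k with
  | empty =>
    obtain _ | m := k
    · simp
    · simp [powersetCard_eq_empty.2 (show #(∅ : Finset ι) < m + 1 by simp)]
  | cons x s hx ih =>
    obtain _ | m := k
    · simp
    rw [cons_eq_insert] at hg ⊢
    have hgx : 0 ≤ g x := hg x (mem_insert_self x s)
    have hgs : ∀ i ∈ s, 0 ≤ g i := fun i hi => hg i (mem_insert_of_mem hi)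
    set n := #s
    set y := 𝔼 i ∈ s, g i
    set z := 𝔼 i ∈ insert x s, g i
    have hmean : (n + 1) * z = g x + n * y := by
      have h := card_smul_expect (insert x s) g
      rw [card_insert_of_notMem hx, sum_insert hx, ← card_smul_expect, nsmul_eq_mul,
        nsmul_eq_mul] at h
      exact_mod_cast h
    have hpascal : ((n + 1).choose (m + 1) : ℝ) = n.choose (m + 1) + n.choose m := by
      rw [Nat.choose_succ_succ']; push_cast; ring
    have habsorb : ((m : ℝ) + 1) * (n + 1).choose (m + 1) = (n + 1) * n.choose m := by
      exact_mod_cast ((Nat.add_one_mul_choose_eq n m).trans (mul_comm _ _)).symm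
    rw [sum_powersetCard_succ_insert_prod hx, card_insert_of_notMem hx]
    -- The bound from the induction hypothesis is the tangent line of `w ↦ w ^ (m + 1)` at the
    -- old mean `y`, evaluated at the new mean `z`.
    calc ∑ A ∈ s.powersetCard (m + 1), ∏ i ∈ A, g i
          + g x * ∑ A ∈ s.powersetCard m, ∏ i ∈ A, g i
        ≤ n.choose (m + 1) * y ^ (m + 1) + g x * (n.choose m * y ^ m) := by
          gcongr
          · exact ih hgs _
          · exact ih hgs _
      _ = (n + 1).choose (m + 1) * (y ^ (m + 1) + (m + 1) * y ^ m * (z - y)) := by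
          linear_combination (-(y ^ (m + 1))) * hpascal - (y ^ m * (z - y)) * habsorb
            - (n.choose m * y ^ m) * hmean
      _ ≤ ((n + 1).choose (m + 1) : ℕ) * z ^ (m + 1) := by
          gcongr
          exact pow_succ_add_mul_sub_le_pow_succ m (expect_nonneg hg) (expect_nonneg hgs)

end Finset

section UniformMeasure

variable {Ω : Type*} [Fintype Ω] [Nonempty Ω] [MeasurableSpace Ω] [MeasurableSingletonClass Ω]

lemma PMF.integral_uniformOfFintype (f : Ω → ℝ) :
    ∫ ω, f ω ∂(PMF.uniformOfFintype Ω).toMeasure = 𝔼 ω, f ω := by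
  simp [PMF.integral_eq_sum, Fintype.expect_eq_sum_div_card, div_eq_inv_mul, mul_sum]

lemma PMF.measureReal_uniformOfFintype (p : Ω → Prop) [DecidablePred p] :
    (PMF.uniformOfFintype Ω).toMeasure.real {ω | p ω} = #{ω | p ω} / Fintype.card Ω := by
  rw [measureReal_def, PMF.toMeasure_uniformOfFintype_apply _ (Set.toFinite _).measurableSet,
    Fintype.card_subtype]
  simp [ENNReal.toReal_div]

end UniformMeasure

/-- **Hoeffding's lemma**. -/
lemma Fintype.expect_exp_mul_sub_expect_le {α : Type*} [Fintype α] [Nonempty α] {b : α → ℝ}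
    {lo hi : ℝ} (hb : ∀ i, b i ∈ Set.Icc lo hi) (t : ℝ) :
    𝔼 i, exp (t * (b i - 𝔼 j, b j)) ≤ exp ((hi - lo) ^ 2 * t ^ 2 / 8) := by
  let _ : MeasurableSpace α := ⊤
  have _ : MeasurableSingletonClass α := ⟨fun _ => trivial⟩
  have h := (hasSubgaussianMGF_of_mem_Icc (μ := (PMF.uniformOfFintype α).toMeasure)
    (measurable_of_countable b).aemeasurable (ae_of_all _ hb)).mgf_le t
  simp only [mgf, PMF.integral_uniformOfFintype] at h
  convert h using 2
  simp only [NNReal.coe_pow, NNReal.coe_div, coe_nnnorm, Real.norm_eq_abs, sq_abs,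
    NNReal.coe_ofNat, div_pow]
  ring

namespace Equiv.Perm

variable {α : Type*} [Fintype α] [DecidableEq α]

lemma exists_image_eq_of_card_eq {A B : Finset α} (h : #A = #B) :
    ∃ σ : Perm α, A.image σ = B := by
  refine ⟨(equivOfCardEq h).extendSubtype, eq_of_subset_of_card_le ?_ ?_⟩
  · intro b hb
    obtain ⟨a, ha, rfl⟩ := mem_image.1 hb
    exact extendSubtype_mem _ a ha
  · rw [card_image_of_injective _ (Equiv.injective _), h]

lemma sum_image_eq_of_card_eq (F : Finset α → ℝ) {A B : Finset α} (h : #A = #B) :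
    ∑ τ : Perm α, F (A.image τ) = ∑ τ : Perm α, F (B.image τ) := by
  obtain ⟨σ, rfl⟩ := exists_image_eq_of_card_eq h
  simp_rw [image_image, ← coe_mul]
  exact (Equiv.sum_comp (Equiv.mulRight σ) fun τ => F (A.image τ)).symm

lemma sum_powersetCard_image (τ : Perm α) (F : Finset α → ℝ) (k : ℕ) :
    ∑ A ∈ univ.powersetCard k, F (A.image τ) = ∑ A ∈ univ.powersetCard k, F A := by
  conv_rhs => rw [← map_univ_equiv τ, powersetCard_map, sum_map]
  simp [map_eq_image]

lemma choose_mul_sum_image (F : Finset α → ℝ) (J : Finset α) :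
    ((Fintype.card α).choose #J : ℝ) * ∑ τ : Perm α, F (J.image τ)
      = Fintype.card (Perm α) * ∑ A ∈ univ.powersetCard #J, F A := by
  calc ((Fintype.card α).choose #J : ℝ) * ∑ τ : Perm α, F (J.image τ)
      = ∑ A ∈ univ.powersetCard #J, ∑ τ : Perm α, F (A.image τ) := by
        rw [sum_congr rfl fun A hA => sum_image_eq_of_card_eq F (mem_powersetCard.1 hA).2,
          sum_const, card_powersetCard, card_univ, nsmul_eq_mul]
    _ = ∑ τ : Perm α, ∑ A ∈ univ.powersetCard #J, F A := by
        rw [sum_comm]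
        exact sum_congr rfl fun τ _ => sum_powersetCard_image τ F _
    _ = Fintype.card (Perm α) * ∑ A ∈ univ.powersetCard #J, F A := by
        rw [sum_const, card_univ, nsmul_eq_mul]

theorem expect_prod_le_expect_pow {g : α → ℝ} (hg : ∀ i, 0 ≤ g i) (J : Finset α) :
    𝔼 τ : Perm α, ∏ j ∈ J, g (τ j) ≤ (𝔼 i, g i) ^ #J := by
  have hchoose : (0 : ℝ) < (Fintype.card α).choose #J :=
    Nat.cast_pos.2 (Nat.choose_pos (card_le_univ J))
  have hmaclaurin := sum_powersetCard_prod_le_choose_mul_expect_pow univ (fun i _ => hg i) #J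
  rw [card_univ] at hmaclaurin
  rw [Fintype.expect_eq_sum_div_card, div_le_iff₀ (by positivity)]
  refine le_of_mul_le_mul_left ?_ hchoose
  calc ((Fintype.card α).choose #J : ℝ) * ∑ τ : Perm α, ∏ j ∈ J, g (τ j)
      = Fintype.card (Perm α) * ∑ A ∈ univ.powersetCard #J, ∏ i ∈ A, g i := by
        simp_rw [← prod_image fun x _ y _ h => (Equiv.injective _ h : x = y)]
        exact choose_mul_sum_image (fun A => ∏ i ∈ A, g i) J
    _ ≤ Fintype.card (Perm α) * ((Fintype.card α).choose #J * (𝔼 i, g i) ^ #J) := by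
        gcongr
    _ = (Fintype.card α).choose #J * ((𝔼 i, g i) ^ #J * Fintype.card (Perm α)) := by ring

variable [Nonempty α] {b : α → ℝ} {lo hi : ℝ}

theorem hasSubgaussianMGF_sum_sub_expect [MeasurableSpace (Perm α)]
    [MeasurableSingletonClass (Perm α)] (hb : ∀ i, b i ∈ Set.Icc lo hi) (J : Finset α) :
    HasSubgaussianMGF (fun τ : Perm α => ∑ j ∈ J, (b (τ j) - 𝔼 i, b i))
      (#J * (‖hi - lo‖₊ / 2) ^ 2) (PMF.uniformOfFintype (Perm α)).toMeasure where
  integrable_exp_mul _ := .of_finite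
  mgf_le t := by
    simp only [mgf, PMF.integral_uniformOfFintype, mul_sum, exp_sum]
    calc 𝔼 τ : Perm α, ∏ j ∈ J, exp (t * (b (τ j) - 𝔼 i, b i))
        ≤ (𝔼 i, exp (t * (b i - 𝔼 i, b i))) ^ #J :=
          expect_prod_le_expect_pow (g := fun i => exp (t * (b i - 𝔼 i, b i)))
            (fun _ => (exp_pos _).le) J
      _ ≤ exp ((hi - lo) ^ 2 * t ^ 2 / 8) ^ #J :=
          pow_le_pow_left₀ (expect_nonneg fun _ _ => (exp_pos _).le)
            (Fintype.expect_exp_mul_sub_expect_le hb t) _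
      _ = exp (((#J * (‖hi - lo‖₊ / 2) ^ 2 : ℝ≥0) : ℝ) * t ^ 2 / 2) := by
          rw [← exp_nat_mul]
          push_cast
          rw [Real.norm_eq_abs, div_pow, sq_abs]
          ring_nf

/-- **Hoeffding's inequality** for sampling without replacement. -/
theorem card_sum_sub_expect_ge_div_card_le (hb : ∀ i, b i ∈ Set.Icc lo hi) (J : Finset α)
    {t : ℝ} (ht : 0 ≤ t) :
    (#{τ : Perm α | t ≤ ∑ j ∈ J, (b (τ j) - 𝔼 i, b i)} : ℝ) / Fintype.card (Perm α)
      ≤ exp (-2 * t ^ 2 / (#J * (hi - lo) ^ 2)) := by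
  let _ : MeasurableSpace (Perm α) := ⊤
  have _ : MeasurableSingletonClass (Perm α) := ⟨fun _ => trivial⟩
  have h := (hasSubgaussianMGF_sum_sub_expect hb J).measure_ge_le ht
  rw [PMF.measureReal_uniformOfFintype] at h
  convert h using 2
  push_cast
  rw [Real.norm_eq_abs, div_pow, sq_abs]
  generalize hi - lo = w
  ring

theorem card_abs_sum_sub_expect_ge_div_card_le (hb : ∀ i, b i ∈ Set.Icc lo hi)
    (J : Finset α) {t : ℝ} (ht : 0 ≤ t) :
    (#{τ : Perm α | t ≤ |∑ j ∈ J, (b (τ j) - 𝔼 i, b i)|} : ℝ) / Fintype.card (Perm α)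
      ≤ 2 * exp (-2 * t ^ 2 / (#J * (hi - lo) ^ 2)) := by
  have hnb : ∀ i, -b i ∈ Set.Icc (-hi) (-lo) :=
    fun i => ⟨neg_le_neg (hb i).2, neg_le_neg (hb i).1⟩
  have hneg : ∀ τ : Perm α,
      ∑ j ∈ J, (-b (τ j) - 𝔼 i, -b i) = -∑ j ∈ J, (b (τ j) - 𝔼 i, b i) := fun τ => by
    rw [expect_neg_distrib, ← sum_neg_distrib]
    exact sum_congr rfl fun _ _ => by ring
  have hsplit : #{τ : Perm α | t ≤ |∑ j ∈ J, (b (τ j) - 𝔼 i, b i)|}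
      ≤ #{τ : Perm α | t ≤ ∑ j ∈ J, (b (τ j) - 𝔼 i, b i)}
        + #{τ : Perm α | t ≤ ∑ j ∈ J, (-b (τ j) - 𝔼 i, -b i)} := by
    simp_rw [hneg]
    refine (card_le_card fun τ hτ => ?_).trans (card_union_le _ _)
    simpa only [mem_filter, mem_union, mem_univ, true_and, ← le_abs] using hτ
  have hupper := card_sum_sub_expect_ge_div_card_le hb J ht
  have hlower := card_sum_sub_expect_ge_div_card_le hnb J ht
  rw [neg_sub_neg] at hlower
  rw [div_le_iff₀ (Nat.cast_pos.2 Fintype.card_pos)] at hupper hlower ⊢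
  calc _ ≤ (_ : ℝ) + _ := by exact_mod_cast hsplit
    _ ≤ _ := add_le_add hupper hlower
    _ = _ := by ring

end Equiv.Perm

lemma mul_le_abs_sub_of_le_abs_div_mul_sub {n m s μ δ : ℝ} (hn : 0 < n) (hm : 0 < m)
    (h : δ * (n * μ) ≤ |n / m * s - n * μ|) : m * δ * μ ≤ |s - m * μ| := by
  rw [show n / m * s - n * μ = n / m * (s - m * μ) by field_simp, abs_mul,
    abs_of_pos (by positivity)] at h
  calc m * δ * μ = m / n * (δ * (n * μ)) := by field_simp
    _ ≤ m / n * (n / m * |s - m * μ|) := by gcongr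
    _ = |s - m * μ| := by field_simp

theorem hoeffding_without_replacement_scores_general {N M : ℕ} (hM : 1 ≤ M) (hMN : M ≤ N)
    (C ε : ℝ) (hC : 1 ≤ C) (hε : 0 < ε)
    (a : Fin N → ℝ) (ha : ∀ j, 1 / C ≤ a j ∧ a j ≤ C) :
    ((Finset.univ.filter (fun τ : Equiv.Perm (Fin N) =>
        ε / 4 * ∑ j, a j ≤
          |(N : ℝ) / M * ∑ j ∈ Finset.univ.filter (fun j : Fin N => (j : ℕ) < M), a (τ j)
            - ∑ j, a j|)).card : ℝ)
      / (Fintype.card (Equiv.Perm (Fin N)) : ℝ)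
    ≤ 2 * Real.exp (-(ε ^ 2 * M) / (8 * C ^ 4)) := by
  have : Nonempty (Fin N) := ⟨⟨0, by omega⟩⟩
  have hC₀ : 0 < C := by linarith
  have hM₀ : (0 : ℝ) < M := by exact_mod_cast hM
  set J : Finset (Fin N) := {j | (j : ℕ) < M}
  have hJ : #J = M := by simp [J, Fin.card_filter_val_lt, hMN]
  set μ := 𝔼 j, a j
  have hμ : 1 / C ≤ μ := le_expect univ_nonempty fun j _ => (ha j).1
  have hevent : ∀ τ : Perm (Fin N), ε / 4 * ∑ j, a j ≤ |N / M * ∑ j ∈ J, a (τ j) - ∑ j, a j| →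
      M * (ε / 4) * μ ≤ |∑ j ∈ J, (a (τ j) - μ)| := fun τ h => by
    rw [sum_sub_distrib, sum_const, hJ, nsmul_eq_mul]
    rw [← card_smul_expect, card_univ, Fintype.card_fin, nsmul_eq_mul] at h
    exact mul_le_abs_sub_of_le_abs_div_mul_sub (by exact_mod_cast (by omega : 0 < N)) hM₀ h
  -- The range `[0, C]` rather than `[1 / C, C]` keeps the width positive when `C = 1`.
  have htail := Perm.card_abs_sum_sub_expect_ge_div_card_le (lo := 0) (hi := C)
    (fun j => ⟨(one_div_pos.2 hC₀).le.trans (ha j).1, (ha j).2⟩) J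
    (t := M * (ε / 4) * μ) (mul_nonneg (by positivity) ((one_div_pos.2 hC₀).le.trans hμ))
  refine le_trans ?_ (htail.trans ?_)
  · gcongr ?_ / _
    exact_mod_cast card_le_card (monotone_filter_right _ fun τ _ => hevent τ)
  · rw [hJ, sub_zero]
    gcongr 2 * exp ?_
    rw [div_le_div_iff₀ (by positivity) (by positivity)]
    have hμC : 1 ≤ μ * C := (div_le_iff₀ hC₀).1 hμ
    nlinarith [mul_nonneg (sq_nonneg (M * ε * C)) (by nlinarith : (0 : ℝ) ≤ (μ * C) ^ 2 - 1)]

/-- Hoeffding bound for sampling without replacement of bounded attention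
scores: for `a_j ∈ [1/C, C]` and a uniformly random permutation `τ` of
`{1,…,N}`, the probability (counting measure ratio over all permutations) that
the rescaled sample `(N/M)·∑_{j=1}^M a_{τ(j)}` deviates from `∑_j a_j` by at
least `(ε/4)·∑_j a_j` is at most `2·exp(-ε²M/(8C⁴))`. -/
theorem hoeffding_without_replacement_scores {N M : ℕ} (hM : 1 ≤ M) (hMN : M ≤ N)
    (C ε : ℝ) (hC : 1 ≤ C) (hε : 0 < ε) (hε1 : ε ≤ 1)
    (a : Fin N → ℝ) (ha : ∀ j, 1 / C ≤ a j ∧ a j ≤ C) :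
    ((Finset.univ.filter (fun τ : Equiv.Perm (Fin N) =>
        ε / 4 * ∑ j, a j ≤
          |(N : ℝ) / M * ∑ j ∈ Finset.univ.filter (fun j : Fin N => (j : ℕ) < M), a (τ j)
            - ∑ j, a j|)).card : ℝ)
      / (Fintype.card (Equiv.Perm (Fin N)) : ℝ)
    ≤ 2 * Real.exp (-(ε ^ 2 * M) / (8 * C ^ 4)) :=
  hoeffding_without_replacement_scores_general hM hMN C ε hC hε a ha
end

section
/- Attention leakage lemma: Let q ∈ ℝ^d, keys k_j ∈ ℝ^d and values v_j ∈ ℝ^m for j ∈ {1,…,N}, and let S ⊆ {1,…,N} be nonempty. Set V := max_{1≤j≤N} ‖v_j‖₂, s := ∑_{j∈S} exp(⟨q,k_j⟩), and x := ∑_{j∉S} exp(⟨q,k_j⟩). Then ‖ (∑_{j∈S} exp(⟨q,k_j⟩)·v_j)/s − (∑_{j=1}^{N} exp(⟨q,k_j⟩)·v_j)/(s+x) ‖₂ ≤ 2·V·x/s. -/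
open Matrix Finset

/-! Split the full weighted sum as `A + C` with `A` the part over `S` (total weight `s`) and `C`
the part over `Sᶜ` (total weight `x`). Then
`s⁻¹ • A - (s + x)⁻¹ • (A + C) = (s + x)⁻¹ • ((x / s) • A - C)`, and both `(x / s) • A` and `C`
have norm at most `x V`, so the difference is at most `2 x V / (s + x) ≤ 2 x V / s`. -/

section

variable {E : Type*} [NormedAddCommGroup E] [NormedSpace ℝ E]

lemma norm_sum_smul_le_sum_mul {ι : Type*} (T : Finset ι) {w : ι → ℝ} (hw : ∀ j, 0 ≤ w j)
    {v : ι → E} {V : ℝ} (hv : ∀ j, ‖v j‖ ≤ V) :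
    ‖∑ j ∈ T, w j • v j‖ ≤ (∑ j ∈ T, w j) * V := by
  rw [Finset.sum_mul]
  refine norm_sum_le_of_le T fun j _ => ?_
  rw [norm_smul, Real.norm_of_nonneg (hw j)]
  exact mul_le_mul_of_nonneg_left (hv j) (hw j)

lemma inv_smul_sub_inv_add_smul_add {s x : ℝ} (hs : s ≠ 0) (hsx : s + x ≠ 0) (A C : E) :
    s⁻¹ • A - (s + x)⁻¹ • (A + C) = (s + x)⁻¹ • ((x / s) • A - C) := by
  have hcoef : s⁻¹ - (s + x)⁻¹ = (s + x)⁻¹ * (x / s) := by field_simp; ring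
  rw [smul_sub, smul_smul, ← hcoef, sub_smul, smul_add]
  abel

lemma norm_inv_smul_sub_inv_add_smul_add_le {s x V : ℝ} (hs : 0 < s) (hx : 0 ≤ x) {A C : E}
    (hA : ‖A‖ ≤ s * V) (hC : ‖C‖ ≤ x * V) :
    ‖s⁻¹ • A - (s + x)⁻¹ • (A + C)‖ ≤ 2 * V * x / s := by
  have hsx : 0 < s + x := by linarith
  have hxA : ‖(x / s) • A‖ ≤ x * V := by
    rw [norm_smul, Real.norm_of_nonneg (by positivity), div_mul_comm, mul_comm x]
    exact mul_le_mul_of_nonneg_right ((div_le_iff₀ hs).2 (by linarith)) hx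
  have hV : 0 ≤ V := nonneg_of_mul_nonneg_right ((norm_nonneg A).trans hA) hs
  rw [inv_smul_sub_inv_add_smul_add hs.ne' hsx.ne', norm_smul, Real.norm_of_nonneg (by positivity)]
  calc (s + x)⁻¹ * ‖(x / s) • A - C‖
      ≤ (s + x)⁻¹ * (2 * V * x) := by
        gcongr
        linarith [norm_sub_le ((x / s) • A) C]
    _ = 2 * V * x / (s + x) := by rw [inv_mul_eq_div]
    _ ≤ 2 * V * x / s := by gcongr; linarith

lemma norm_sum_inv_smul_sub_sum_inv_smul_le {ι : Type*} [Fintype ι] [DecidableEq ι] (S : Finset ι)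
    {w : ι → ℝ} (hw : ∀ j, 0 ≤ w j) (hS : 0 < ∑ j ∈ S, w j) {v : ι → E} {V : ℝ}
    (hv : ∀ j, ‖v j‖ ≤ V) :
    ‖(∑ j ∈ S, w j)⁻¹ • ∑ j ∈ S, w j • v j
      - (∑ j ∈ S, w j + ∑ j ∈ Sᶜ, w j)⁻¹ • ∑ j, w j • v j‖
      ≤ 2 * V * (∑ j ∈ Sᶜ, w j) / ∑ j ∈ S, w j := by
  rw [← Finset.sum_add_sum_compl S fun j => w j • v j]
  exact norm_inv_smul_sub_inv_add_smul_add_le hS (Finset.sum_nonneg fun j _ => hw j)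
    (norm_sum_smul_le_sum_mul S hw hv) (norm_sum_smul_le_sum_mul Sᶜ hw hv)

end

/-- Attention leakage lemma: with `V := max_j ‖v_j‖₂`,
`s := ∑_{j∈S} exp⟨q,k_j⟩` and `x := ∑_{j∉S} exp⟨q,k_j⟩`, the attention output
restricted to `S` differs from the full attention output by at most
`2·V·x/s` in Euclidean norm. -/
theorem attention_leakage {d m N : ℕ}
    (q : Fin d → ℝ) (k : Fin N → Fin d → ℝ) (v : Fin N → EuclideanSpace ℝ (Fin m))
    (S : Finset (Fin N)) (hS : S.Nonempty)
    (V : ℝ) (hV : IsGreatest (Set.range fun j => ‖v j‖) V)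
    (s x : ℝ)
    (hs : s = ∑ j ∈ S, Real.exp (q ⬝ᵥ k j))
    (hx : x = ∑ j ∈ Sᶜ, Real.exp (q ⬝ᵥ k j)) :
    ‖s⁻¹ • ∑ j ∈ S, Real.exp (q ⬝ᵥ k j) • v j
      - (s + x)⁻¹ • ∑ j, Real.exp (q ⬝ᵥ k j) • v j‖ ≤ 2 * V * x / s := by
  subst hs hx
  exact norm_sum_inv_smul_sub_sum_inv_smul_le S (fun j => (Real.exp_pos _).le)
    (Finset.sum_pos (fun j _ => Real.exp_pos _) hS) fun j => hV.2 ⟨j, rfl⟩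
end

section
/- Decorrelating vector construction (combinatorial core of Theorem 4.2): Let n ≥ 1, let r be a positive even integer with binomial coefficient C(r, r/2) ≥ n, and let B > 0. Then there exist vectors u_1,…,u_n ∈ ℝ^r such that: every coordinate of every u_i lies in {0, −B}; every u_i has exactly r/2 coordinates equal to 0; and, setting v_i := B·(1,…,1) + u_i, one has ⟨u_i, v_i⟩ = 0 for every i, and ⟨u_i, v_j⟩ ≤ −B² for all i ≠ j. -/
open Matrix Finset

/-- Decorrelating vector construction: if `C(r, r/2) ≥ n` (with `r` a positive
even integer and `B > 0`), there are vectors `u_1,…,u_n ∈ {0,-B}^r`, each with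
exactly `r/2` zero coordinates, such that with `v_i := B·(1,…,1) + u_i` one has
`⟨u_i, v_i⟩ = 0` for all `i` and `⟨u_i, v_j⟩ ≤ -B²` for all `i ≠ j`. -/
theorem decorrelating_vectors (n r : ℕ) (hn : 1 ≤ n) (hr : 0 < r) (hre : Even r)
    (hbin : n ≤ Nat.choose r (r / 2)) (B : ℝ) (hB : 0 < B) :
    ∃ u v : Fin n → Fin r → ℝ,
      (∀ i j, u i j = 0 ∨ u i j = -B) ∧
      (∀ i, (Finset.univ.filter (fun j => u i j = 0)).card = r / 2) ∧
      (∀ i, v i = (fun _ => B) + u i) ∧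
      (∀ i, u i ⬝ᵥ v i = 0) ∧
      (∀ i i', i ≠ i' → u i ⬝ᵥ v i' ≤ -B ^ 2) := by
  have hcard : Fintype.card (Fin n) ≤ Fintype.card {s : Finset (Fin r) // s.card = r / 2} := by
    rw [Fintype.card_finset_len, Fintype.card_fin, Fintype.card_fin]
    exact hbin
  obtain ⟨f⟩ := Function.Embedding.nonempty_of_card_le hcard
  set u : Fin n → Fin r → ℝ := fun i j => if j ∈ (f i).1 then 0 else -B with hu
  refine ⟨u, fun i => (fun _ => B) + u i, ?_, ?_, fun i => rfl, ?_, ?_⟩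
  · intro i j; by_cases h : j ∈ (f i).1 <;> simp [hu, h]
  · intro i
    have heq : (Finset.univ.filter (fun j => u i j = 0)) = (f i).1 := by
      ext j; by_cases h : j ∈ (f i).1 <;> simp [hu, h, hB.ne']
    rw [heq]; exact (f i).2
  · intro i
    simp only [dotProduct, Pi.add_apply]
    apply Finset.sum_eq_zero
    intro j _
    by_cases h : j ∈ (f i).1 <;> simp [hu, h]
  · intro i i' hne
    have hdiff : 1 ≤ ((f i').1 \ (f i).1).card := by
      rw [Nat.one_le_iff_ne_zero, Ne, Finset.card_eq_zero, Finset.sdiff_eq_empty_iff_subset]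
      intro hsub
      exact hne (f.injective (Subtype.ext
        (Finset.eq_of_subset_of_card_le hsub (by rw [(f i).2, (f i').2])).symm))
    have hsum : u i ⬝ᵥ ((fun _ => B) + u i') =
        ∑ j : Fin r, (if j ∈ (f i').1 \ (f i).1 then -B ^ 2 else 0) := by
      simp only [dotProduct, Pi.add_apply]
      apply Finset.sum_congr rfl
      intro j _
      by_cases h : j ∈ (f i).1 <;> by_cases h' : j ∈ (f i').1 <;>
        simp [hu, h, h'] <;> ring
    rw [hsum, Finset.sum_ite_mem, Finset.univ_inter, Finset.sum_const, nsmul_eq_mul]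
    have hB2 : (0 : ℝ) < B ^ 2 := by positivity
    have : (1 : ℝ) ≤ ((f i').1 \ (f i).1).card := by exact_mod_cast hdiff
    nlinarith
end

section
/- Theorem 4.2 mathematical core (one long attention simulates many short attentions after augmentation): Let n, M ≥ 1, C > 0, B > 0, and let r be a positive even integer with binomial coefficient C(r, r/2) ≥ n. For each i ∈ {1,…,n} and j ∈ {1,…,M} let q_{i,j}, k_{i,j}, v_{i,j} ∈ ℝ^d satisfy |⟨q_{i,j}, k_{i',j'}⟩| ≤ C² for all pairs (i,j),(i',j') and ‖v_{i,j}‖₂ ≤ C for all (i,j). Then there exist vectors u_1,…,u_n, w_1,…,w_n ∈ ℝ^r such that, defining augmented queries q'_{i,j} := (q_{i,j}, u_i) ∈ ℝ^{d+r} and augmented keys k'_{i,j} := (k_{i,j}, w_i) ∈ ℝ^{d+r}, for every (i,j): ‖ (∑_{i'=1}^{n} ∑_{j'=1}^{M} exp(⟨q'_{i,j}, k'_{i',j'}⟩)·v_{i',j'}) / (∑_{i'=1}^{n} ∑_{j'=1}^{M} exp(⟨q'_{i,j}, k'_{i',j'}⟩)) − (∑_{j'=1}^{M} exp(⟨q_{i,j},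 k_{i,j'}⟩)·v_{i,j'}) / (∑_{j'=1}^{M} exp(⟨q_{i,j}, k_{i,j'}⟩)) ‖₂ ≤ 2·n·C·exp(2C² − B²). In particular, for every η > 0, choosing B with B² ≥ 2C² + ln(2nC/η) makes the left-hand side at most η. -/
open Matrix Finset

open Real in
lemma attn_error {d n M : ℕ} (hn : 1 ≤ n) (hM : 1 ≤ M)
    (C B : ℝ) (hC : 0 < C)
    (a : Fin n → Fin M → ℝ) (b : Fin n → ℝ)
    (v : Fin n → Fin M → EuclideanSpace ℝ (Fin d)) (i : Fin n)
    (ha : ∀ i' j', |a i' j'| ≤ C ^ 2) (hv : ∀ i' j', ‖v i' j'‖ ≤ C)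
    (hbi : b i = B ^ 2) (hb : ∀ i', i' ≠ i → b i' ≤ 0) :
    ‖(∑ i', ∑ j', Real.exp (a i' j' + b i'))⁻¹ •
        (∑ i', ∑ j', Real.exp (a i' j' + b i') • v i' j')
      - (∑ j', Real.exp (a i j'))⁻¹ • (∑ j', Real.exp (a i j') • v i j')‖
      ≤ 2 * n * C * Real.exp (2 * C ^ 2 - B ^ 2) := by
  have hMpos : 0 < M := hM
  haveI : NeZero M := ⟨hMpos.ne'⟩
  set T : ℝ := ∑ j', Real.exp (a i j') with hTdef
  set N : EuclideanSpace ℝ (Fin d) := ∑ j', Real.exp (a i j') • v i j' with hNdef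
  set D : ℝ := ∑ i', ∑ j', Real.exp (a i' j' + b i') with hDdef
  set Nv : EuclideanSpace ℝ (Fin d) := ∑ i', ∑ j', Real.exp (a i' j' + b i') • v i' j' with hNvdef
  set R : ℝ := ∑ i' ∈ univ.erase i, ∑ j', Real.exp (a i' j' + b i') with hRdef
  set RN : EuclideanSpace ℝ (Fin d) := ∑ i' ∈ univ.erase i, ∑ j', Real.exp (a i' j' + b i') • v i' j' with hRNdef
  have hT : 0 < T := Finset.sum_pos (fun _ _ => Real.exp_pos _) univ_nonempty
  have hTlb : (M : ℝ) * Real.exp (-(C ^ 2)) ≤ T := by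
    calc (M : ℝ) * Real.exp (-(C ^ 2))
        = (univ : Finset (Fin M)).card • Real.exp (-(C ^ 2)) := by
          simp [nsmul_eq_mul]
      _ ≤ T := Finset.card_nsmul_le_sum _ _ _ (fun j _ => by
          apply Real.exp_le_exp.2
          have := (abs_le.1 (ha i j)).1; linarith)
  have hR0 : 0 ≤ R := Finset.sum_nonneg fun _ _ =>
    Finset.sum_nonneg fun _ _ => (Real.exp_pos _).le
  have hRub : R ≤ (n : ℝ) * M * Real.exp (C ^ 2) := by
    calc R ≤ ∑ _i' ∈ univ.erase i, ∑ _j' : Fin M, Real.exp (C ^ 2) := by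
          apply Finset.sum_le_sum; intro i' hi'
          apply Finset.sum_le_sum; intro j' _
          apply Real.exp_le_exp.2
          have h1 := (abs_le.1 (ha i' j')).2
          have h2 := hb i' (Finset.mem_erase.1 hi').1
          linarith
      _ = ((univ.erase i).card : ℝ) * (M * Real.exp (C ^ 2)) := by
          simp [Finset.sum_const, nsmul_eq_mul]
      _ ≤ (n : ℝ) * M * Real.exp (C ^ 2) := by
          have hcard : ((univ.erase i).card : ℝ) ≤ (n : ℝ) := by
            have := Finset.card_erase_le (s := (univ : Finset (Fin n))) (a := i)
            exact_mod_cast le_trans (Nat.cast_le.2 this) (by simp)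
          have : (0:ℝ) ≤ M * Real.exp (C ^ 2) := by positivity
          nlinarith [Real.exp_pos (C^2)]
  have hDsplit : D = Real.exp (B ^ 2) * T + R := by
    rw [hDdef, ← Finset.add_sum_erase _ _ (Finset.mem_univ i)]
    congr 1
    rw [hTdef, Finset.mul_sum]
    refine Finset.sum_congr rfl fun j _ => ?_
    rw [hbi, ← Real.exp_add]
    congr 1; ring
  have hNvsplit : Nv = Real.exp (B ^ 2) • N + RN := by
    rw [hNvdef, ← Finset.add_sum_erase _ _ (Finset.mem_univ i)]
    congr 1
    rw [hNdef, Finset.smul_sum]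
    refine Finset.sum_congr rfl fun j _ => ?_
    rw [smul_smul, hbi, ← Real.exp_add]
    congr 2; ring
  have hNnorm : ‖N‖ ≤ C * T := by
    calc ‖N‖ ≤ ∑ j', ‖Real.exp (a i j') • v i j'‖ := norm_sum_le _ _
      _ ≤ ∑ j', Real.exp (a i j') * C := by
          refine Finset.sum_le_sum fun j _ => ?_
          rw [norm_smul, Real.norm_eq_abs, abs_of_pos (Real.exp_pos _)]
          exact mul_le_mul_of_nonneg_left (hv i j) (Real.exp_pos _).le
      _ = C * T := by rw [hTdef, ← Finset.sum_mul]; ring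
  have hRNnorm : ‖RN‖ ≤ C * R := by
    calc ‖RN‖ ≤ ∑ i' ∈ univ.erase i, ‖∑ j', Real.exp (a i' j' + b i') • v i' j'‖ :=
          norm_sum_le _ _
      _ ≤ ∑ i' ∈ univ.erase i, ∑ j', Real.exp (a i' j' + b i') * C := by
          refine Finset.sum_le_sum fun i' _ => ?_
          refine le_trans (norm_sum_le _ _) (Finset.sum_le_sum fun j _ => ?_)
          rw [norm_smul, Real.norm_eq_abs, abs_of_pos (Real.exp_pos _)]
          exact mul_le_mul_of_nonneg_left (hv i' j) (Real.exp_pos _).le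
      _ = C * R := by
          rw [hRdef, Finset.mul_sum]
          refine Finset.sum_congr rfl fun i' _ => ?_
          rw [Finset.mul_sum]
          exact Finset.sum_congr rfl fun j _ => mul_comm (Real.exp (a i' j + b i')) C
  have hD : 0 < D := by
    rw [hDsplit]
    have := Real.exp_pos (B ^ 2)
    nlinarith
  have hid : D⁻¹ • Nv - T⁻¹ • N = (D * T)⁻¹ • (T • Nv - D • N) := by
    have h1 : (D * T)⁻¹ * T = D⁻¹ := by
      rw [mul_inv, mul_assoc, inv_mul_cancel₀ hT.ne', mul_one]
    have h2 : (D * T)⁻¹ * D = T⁻¹ := by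
      rw [mul_inv, mul_comm D⁻¹, mul_assoc, inv_mul_cancel₀ hD.ne']
      ring
    rw [smul_sub, smul_smul, smul_smul, h1, h2]
  have hid2 : T • Nv - D • N = T • RN - R • N := by
    rw [hNvsplit, hDsplit]
    module
  have hnorm1 : ‖T • Nv - D • N‖ ≤ 2 * C * R * T := by
    rw [hid2]
    calc ‖T • RN - R • N‖ ≤ ‖T • RN‖ + ‖R • N‖ := norm_sub_le _ _
      _ = T * ‖RN‖ + R * ‖N‖ := by
          rw [norm_smul, norm_smul, Real.norm_eq_abs, Real.norm_eq_abs,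
            abs_of_pos hT, abs_of_nonneg hR0]
      _ ≤ T * (C * R) + R * (C * T) := by
          have h1 := mul_le_mul_of_nonneg_left hRNnorm hT.le
          have h2 := mul_le_mul_of_nonneg_left hNnorm hR0
          linarith
      _ = 2 * C * R * T := by ring
  have key : 2 * C * R ≤ D * (2 * n * C * Real.exp (2 * C ^ 2 - B ^ 2)) := by
    have h1 : 2 * C * R ≤ 2 * C * ((n : ℝ) * M * Real.exp (C ^ 2)) := by nlinarith
    have he : Real.exp (B ^ 2) * Real.exp (-(C ^ 2)) * Real.exp (2 * C ^ 2 - B ^ 2)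
        = Real.exp (C ^ 2) := by
      rw [← Real.exp_add, ← Real.exp_add]; congr 1; ring
    have h2 : Real.exp (B ^ 2) * ((M : ℝ) * Real.exp (-(C ^ 2))) *
        (2 * n * C * Real.exp (2 * C ^ 2 - B ^ 2)) = 2 * C * ((n : ℝ) * M * Real.exp (C ^ 2)) := by
      linear_combination ((M : ℝ) * (2 * n * C)) * he
    have h3 : Real.exp (B ^ 2) * ((M : ℝ) * Real.exp (-(C ^ 2))) ≤ D := by
      rw [hDsplit]
      have := mul_le_mul_of_nonneg_left hTlb (Real.exp_pos (B ^ 2)).le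
      linarith
    have hrhs0 : 0 ≤ 2 * (n : ℝ) * C * Real.exp (2 * C ^ 2 - B ^ 2) := by positivity
    have h4 := mul_le_mul_of_nonneg_right h3 hrhs0
    calc 2 * C * R ≤ 2 * C * ((n : ℝ) * M * Real.exp (C ^ 2)) := h1
      _ = Real.exp (B ^ 2) * ((M : ℝ) * Real.exp (-(C ^ 2))) *
          (2 * n * C * Real.exp (2 * C ^ 2 - B ^ 2)) := h2.symm
      _ ≤ D * (2 * n * C * Real.exp (2 * C ^ 2 - B ^ 2)) := h4
  rw [hid, norm_smul, Real.norm_eq_abs, abs_of_pos (inv_pos.2 (mul_pos hD hT))]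
  calc (D * T)⁻¹ * ‖T • Nv - D • N‖ ≤ (D * T)⁻¹ * (2 * C * R * T) :=
        mul_le_mul_of_nonneg_left hnorm1 (inv_pos.2 (mul_pos hD hT)).le
    _ = (2 * C * R) / D := by
        rw [mul_inv, div_eq_mul_inv]
        have : T⁻¹ * (2 * C * R * T) = 2 * C * R := by
          rw [mul_comm, mul_assoc, mul_inv_cancel₀ hT.ne', mul_one]
        calc D⁻¹ * T⁻¹ * (2 * C * R * T) = D⁻¹ * (T⁻¹ * (2 * C * R * T)) := by ring
          _ = 2 * C * R * D⁻¹ := by rw [this]; ring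
    _ ≤ 2 * n * C * Real.exp (2 * C ^ 2 - B ^ 2) := by
        rw [div_le_iff₀ hD]
        linarith [key]

lemma dot_append {d r : ℕ} (a c : Fin d → ℝ) (b e : Fin r → ℝ) :
    Fin.append a b ⬝ᵥ Fin.append c e = a ⬝ᵥ c + b ⬝ᵥ e := by
  simp [dotProduct, Fin.sum_univ_add, Fin.append_left, Fin.append_right]


/-- Theorem 4.2 mathematical core: one long attention simulates `n` short
attentions after augmentation.  Given `n` blocks of `M` queries/keys/values
with uniformly bounded scores and values, there exist augmentation vectors
`u_i, w_i ∈ ℝ^r` (with `C(r,r/2) ≥ n`) such that the attention output of the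
concatenated sequence with augmented queries `(q_{i,j}, u_i)` and keys
`(k_{i,j}, w_i)` is within `2·n·C·exp(2C² - B²)` of each block's own attention
output; in particular choosing `B² ≥ 2C² + ln(2nC/η)` makes the error at most
`η`. -/
theorem one_long_attention_simulates_many {d n M : ℕ} (hn : 1 ≤ n) (hM : 1 ≤ M)
    (C B : ℝ) (hC : 0 < C) (hB : 0 < B)
    (r : ℕ) (hr : 0 < r) (hre : Even r) (hbin : n ≤ Nat.choose r (r / 2))
    (q k : Fin n → Fin M → Fin d → ℝ)
    (v : Fin n → Fin M → EuclideanSpace ℝ (Fin d))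
    (hqk : ∀ i j i' j', |q i j ⬝ᵥ k i' j'| ≤ C ^ 2)
    (hv : ∀ i j, ‖v i j‖ ≤ C) :
    ∃ u w : Fin n → Fin r → ℝ,
      (∀ i j,
        ‖(∑ i', ∑ j', Real.exp (Fin.append (q i j) (u i) ⬝ᵥ
              Fin.append (k i' j') (w i')))⁻¹ •
            (∑ i', ∑ j', Real.exp (Fin.append (q i j) (u i) ⬝ᵥ
              Fin.append (k i' j') (w i')) • v i' j')
          - (∑ j', Real.exp (q i j ⬝ᵥ k i j'))⁻¹ •
            (∑ j', Real.exp (q i j ⬝ᵥ k i j') • v i j')‖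
        ≤ 2 * n * C * Real.exp (2 * C ^ 2 - B ^ 2)) ∧
      (∀ η : ℝ, 0 < η → 2 * C ^ 2 + Real.log (2 * n * C / η) ≤ B ^ 2 →
        ∀ i j,
          ‖(∑ i', ∑ j', Real.exp (Fin.append (q i j) (u i) ⬝ᵥ
                Fin.append (k i' j') (w i')))⁻¹ •
              (∑ i', ∑ j', Real.exp (Fin.append (q i j) (u i) ⬝ᵥ
                Fin.append (k i' j') (w i')) • v i' j')
            - (∑ j', Real.exp (q i j ⬝ᵥ k i j'))⁻¹ •
              (∑ j', Real.exp (q i j ⬝ᵥ k i j') • v i j')‖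
          ≤ η) := by
  obtain ⟨m, hm⟩ := hre
  have hm2 : r / 2 = m := by omega
  have hmpos : 0 < m := by omega
  have hcard : Fintype.card (Fin n) ≤
      Fintype.card {s : Finset (Fin r) // s ∈ (univ : Finset (Fin r)).powersetCard m} := by
    rw [Fintype.card_fin, Fintype.card_coe, Finset.card_powersetCard, Finset.card_univ,
      Fintype.card_fin]
    exact hm2 ▸ hbin
  obtain ⟨e⟩ := Function.Embedding.nonempty_of_card_le hcard
  set S : Fin n → Finset (Fin r) := fun i => (e i).1 with hSdef
  have hScard : ∀ i, (S i).card = m := fun i => (Finset.mem_powersetCard.1 (e i).2).2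
  have hSinj : Function.Injective S := fun i i' h => e.injective (Subtype.ext h)
  set γ : ℝ := B ^ 2 * (1 / (m : ℝ) - 1) with hγdef
  set u : Fin n → Fin r → ℝ := fun i t => if t ∈ S i then 1 else 0 with hudef
  set w : Fin n → Fin r → ℝ := fun i t => if t ∈ S i then B ^ 2 + γ else γ with hwdef
  have hdot : ∀ i i', u i ⬝ᵥ w i' = B ^ 2 * (((S i ∩ S i').card : ℝ) + 1 - m) := by
    intro i i'
    have h1 : u i ⬝ᵥ w i' = ∑ t ∈ S i, w i' t := by
      calc u i ⬝ᵥ w i' = ∑ t, (if t ∈ S i then w i' t else 0) := by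
            refine Finset.sum_congr rfl fun t _ => ?_
            by_cases h : t ∈ S i <;> simp [hudef, h]
        _ = ∑ t ∈ univ ∩ S i, w i' t := Finset.sum_ite_mem _ _ _
        _ = ∑ t ∈ S i, w i' t := by rw [Finset.univ_inter]
    have h2 : ∑ t ∈ S i, w i' t
        = ((S i ∩ S i').card : ℝ) * B ^ 2 + (S i).card * γ := by
      calc ∑ t ∈ S i, w i' t
          = ∑ t ∈ S i, ((if t ∈ S i' then B ^ 2 else 0) + γ) := by
            refine Finset.sum_congr rfl fun t _ => ?_
            by_cases h : t ∈ S i' <;> simp [hwdef, h]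
        _ = (∑ t ∈ S i, if t ∈ S i' then B ^ 2 else 0) + (S i).card * γ := by
            rw [Finset.sum_add_distrib, Finset.sum_const, nsmul_eq_mul]
        _ = ((S i ∩ S i').card : ℝ) * B ^ 2 + (S i).card * γ := by
            rw [Finset.sum_ite_mem, Finset.sum_const, nsmul_eq_mul]
    rw [h1, h2, hScard, hγdef]
    have hmne : (m : ℝ) ≠ 0 := Nat.cast_ne_zero.2 hmpos.ne'
    field_simp
    ring
  have hdiag : ∀ i, u i ⬝ᵥ w i = B ^ 2 := by
    intro i
    rw [hdot, Finset.inter_self, hScard]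
    ring
  have hoff : ∀ i i', i' ≠ i → u i ⬝ᵥ w i' ≤ 0 := by
    intro i i' hne
    rw [hdot]
    have hsub : S i ∩ S i' ⊆ S i := Finset.inter_subset_left
    have hlt : (S i ∩ S i').card < m := by
      rcases lt_or_eq_of_le (le_trans (Finset.card_le_card hsub) (hScard i).le) with h | h
      · exact h
      · exfalso
        have h3 : S i ∩ S i' = S i :=
          Finset.eq_of_subset_of_card_le hsub (by rw [h, hScard])
        have h4 : S i ⊆ S i' := by
          intro t ht
          have := h3 ▸ ht
          exact (Finset.mem_inter.1 this).2
        have h5 : S i = S i' :=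
          Finset.eq_of_subset_of_card_le h4 (by rw [hScard, hScard])
        exact hne (hSinj h5).symm
    have hcast : ((S i ∩ S i').card : ℝ) + 1 - m ≤ 0 := by
      have : ((S i ∩ S i').card + 1 : ℕ) ≤ m := hlt
      have : (((S i ∩ S i').card + 1 : ℕ) : ℝ) ≤ (m : ℕ) := Nat.cast_le.2 this
      push_cast at this
      linarith
    exact mul_nonpos_of_nonneg_of_nonpos (sq_nonneg B) hcast
  have hmain : ∀ (i : Fin n) (j : Fin M),
      ‖(∑ i', ∑ j', Real.exp (Fin.append (q i j) (u i) ⬝ᵥ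
            Fin.append (k i' j') (w i')))⁻¹ •
          (∑ i', ∑ j', Real.exp (Fin.append (q i j) (u i) ⬝ᵥ
            Fin.append (k i' j') (w i')) • v i' j')
        - (∑ j', Real.exp (q i j ⬝ᵥ k i j'))⁻¹ •
          (∑ j', Real.exp (q i j ⬝ᵥ k i j') • v i j')‖
      ≤ 2 * n * C * Real.exp (2 * C ^ 2 - B ^ 2) := by
    intro i j
    simp only [dot_append]
    exact attn_error hn hM C B hC (fun i' j' => q i j ⬝ᵥ k i' j')
      (fun i' => u i ⬝ᵥ w i') v i (fun i' j' => hqk i j i' j')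
      hv (hdiag i) (fun i' h => hoff i i' h)
  refine ⟨u, w, hmain, ?_⟩
  intro η hη hB2 i j
  refine le_trans (hmain i j) ?_
  have hn' : (0 : ℝ) < n := by exact_mod_cast hn
  have hpos : (0 : ℝ) < 2 * n * C := by positivity
  have hdivpos : (0 : ℝ) < 2 * n * C / η := by positivity
  have hexp : Real.exp (2 * C ^ 2 - B ^ 2) ≤ (2 * n * C / η)⁻¹ := by
    rw [← Real.exp_log hdivpos, ← Real.exp_neg]
    exact Real.exp_le_exp.2 (by linarith)
  calc 2 * n * C * Real.exp (2 * C ^ 2 - B ^ 2)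
      ≤ 2 * n * C * (2 * n * C / η)⁻¹ := mul_le_mul_of_nonneg_left hexp hpos.le
    _ = η := by
        field_simp
end
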